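/- arXiv:1305.4892 — 2 statements merged into one kernel-verified Lean document; each statement's English description precedes it below -/
import Mathlib

section
/- Let s = 4 (so s′ = 3), let n ≥ 0, let 0 ≤ x ≤ 4^n and 0 ≤ y ≤ 2·4^n − x. Then c_n(4, x, 3x + y) = Σ_{i,j,k ≥ 0, i+2j+k=y} C(x, i) · C(4^n − x, j) · C(4^n − x − j, k) · 4^{x − i + k} · 6^{j}, where binomial coefficients C(a,b) vanish when b > a. -/
/-- `s' = ⌈(s+1)/2⌉`, the strict-majority threshold for group size `s`. -/
def sPrime (s : ℕ) : ℕ := (s + 2) / 2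

/-- Number of entries equal to `+1` (encoded as `true`) in a configuration. -/
def cfgCard {m : ℕ} (X : Fin m → Bool) : ℕ :=
  (Finset.univ.filter fun i => X i = true).card

/-- The one-step induction map `π` sending a level-`(n+1)` configuration to a
level-`n` configuration by the majority rule with ties resolved in favor of `-1`. -/
def piMap (s n : ℕ) (Z : Fin (s ^ (n + 1)) → Bool) : Fin (s ^ n) → Bool :=
  fun i => decide (sPrime s ≤ (Finset.univ.filter fun j : Fin s =>
    Z ⟨s * (i : ℕ) + (j : ℕ), by
      have h1 : (i : ℕ) + 1 ≤ s ^ n := i.isLt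
      have h2 : (j : ℕ) < s := j.isLt
      have h3 : s * ((i : ℕ) + 1) ≤ s * s ^ n := Nat.mul_le_mul_left _ h1
      have h4 : s * ((i : ℕ) + 1) = s * (i : ℕ) + s := by ring
      have h5 : s ^ (n + 1) = s * s ^ n := by rw [pow_succ, Nat.mul_comm]
      omega⟩ = true).card)


/-- `c_n(s, X, z)`: the number of level-`(n+1)` configurations `Z` with
`card Z = z` and `πZ = X`. -/
def cCount (s n : ℕ) (X : Fin (s ^ n) → Bool) (z : ℕ) : ℕ :=
  (Finset.univ.filter fun Z : Fin (s ^ (n + 1)) → Bool =>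
    cfgCard Z = z ∧ piMap s n Z = X).card

/-- The standard configuration with the first `x` entries equal to `+1`. -/
def stdCfg (m x : ℕ) : Fin m → Bool := fun i => decide ((i : ℕ) < x)

/-- `c_n(s, x, z) := c_n(s, X_x, z)` where `X_x` is the standard level-`n`
configuration with `x` entries equal to `+1`. -/
def cFix (s n x z : ℕ) : ℕ := cCount s n (stdCfg (s ^ n) x) z

/-! Cut a level-`(n+1)` configuration `Z` into its `4 ^ n` consecutive blocks of four entries.
The condition `πZ = X` prescribes the majority of every block and `card Z` is the sum of the
block weights, so `c_n(4, x, ·)` has generating polynomial `P₊ ^ x * P₋ ^ (4 ^ n - x)`, where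
`P₊ = 4X³ + X⁴` and `P₋ = 1 + 4X + 6X²` count the blocks of majority `+1`, resp. `-1`, by
weight. Writing `P₊ = X³ (X + 4)` and expanding `(X + 4) ^ x` and
`(6X² + (1 + 4X)) ^ (4 ^ n - x)` binomially yields the coefficient of `X ^ (3x + y)`. -/

open Polynomial Finset

theorem add_pow_eq_sum_range_of_lt {R : Type*} [CommSemiring R] (x y : R) {n N : ℕ}
    (h : n < N) :
    (x + y) ^ n = ∑ m ∈ range N, x ^ m * y ^ (n - m) * n.choose m := by
  rw [add_pow]
  refine sum_subset (range_subset_range.2 h) fun m _ hm => ?_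
  rw [Nat.choose_eq_zero_of_lt (by simpa using hm), Nat.cast_zero, mul_zero]

theorem coeff_sum_C_mul_X_pow {R ι : Type*} [Semiring R] (S : Finset ι) (c : ι → R)
    (e : ι → ℕ) (k : ℕ) :
    (∑ t ∈ S, C (c t) * X ^ e t).coeff k = ∑ t ∈ S with e t = k, c t := by
  simp only [finsetSum_coeff, coeff_C_mul_X_pow, sum_filter, eq_comm]

section Trinomial

variable {R : Type*} [CommSemiring R]

theorem X_add_C_pow_mul_trinomial_pow (u v w : R) {a b N : ℕ} (ha : a < N) (hb : b < N) :
    (X + C u) ^ a * (1 + C v * X + C w * X ^ 2) ^ b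
      = ∑ t ∈ range N ×ˢ range N ×ˢ range N,
          C (a.choose t.1 * b.choose t.2.1 * (b - t.2.1).choose t.2.2
            * u ^ (a - t.1) * v ^ t.2.2 * w ^ t.2.1) * X ^ (t.1 + 2 * t.2.1 + t.2.2) := by
  have hB : (1 + C v * X + C w * X ^ 2) ^ b = ∑ j ∈ range N, ∑ k ∈ range N,
      (C w * X ^ 2) ^ j * ((C v * X) ^ k * 1 ^ (b - j - k) * ((b - j).choose k : R[X]))
        * (b.choose j : R[X]) := by
    rw [add_comm, add_comm 1, add_pow_eq_sum_range_of_lt _ _ hb]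
    refine sum_congr rfl fun j _ => ?_
    rw [add_pow_eq_sum_range_of_lt _ _ (by omega : b - j < N), mul_sum, sum_mul]
  rw [add_pow_eq_sum_range_of_lt _ _ ha, hB, sum_mul_sum, sum_product]
  refine sum_congr rfl fun i _ => ?_
  rw [sum_product]
  refine sum_congr rfl fun j _ => ?_
  rw [mul_sum]
  refine sum_congr rfl fun k _ => ?_
  simp only [map_mul, map_pow, map_natCast, one_pow, mul_one, pow_add, mul_pow, pow_mul]
  ring

theorem coeff_X_add_C_pow_mul_trinomial_pow (u v w : R) (a b y : ℕ) :
    ((X + C u) ^ a * (1 + C v * X + C w * X ^ 2) ^ b).coeff y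
      = ∑ t ∈ (range (y + 1) ×ˢ range (y + 1) ×ˢ range (y + 1)).filter
            (fun t => t.1 + 2 * t.2.1 + t.2.2 = y),
          a.choose t.1 * b.choose t.2.1 * (b - t.2.1).choose t.2.2
            * u ^ (a - t.1) * v ^ t.2.2 * w ^ t.2.1 := by
  rw [X_add_C_pow_mul_trinomial_pow u v w (by omega : a < a + b + y + 1)
    (by omega : b < a + b + y + 1), coeff_sum_C_mul_X_pow]
  congr 1
  ext ⟨i, j, k⟩
  simp only [mem_filter, mem_product, mem_range]
  omega

end Trinomial

theorem card_filter_piFinset_sum_eq_coeff {ι α : Type*} [Fintype ι] [DecidableEq ι]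
    (S : ι → Finset α) (wt : α → ℕ) (z : ℕ) :
    #{g ∈ Fintype.piFinset S | ∑ i, wt (g i) = z}
      = (∏ i, ∑ a ∈ S i, (X : ℕ[X]) ^ wt a).coeff z := by
  simp only [prod_univ_sum, prod_pow_eq_pow_sum, finsetSum_coeff, coeff_X_pow, card_filter]
  exact sum_congr rfl fun g _ => if_congr eq_comm rfl rfl

theorem prod_stdCfg {M : Type*} [CommMonoid M] (f : Bool → M) {m x : ℕ} (hx : x ≤ m) :
    ∏ i, f (stdCfg m x i) = f true ^ x * f false ^ (m - x) := by
  obtain ⟨d, rfl⟩ := Nat.exists_eq_add_of_le hx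
  unfold stdCfg
  rw [Fin.prod_univ_eq_prod_range (fun i => f (decide (i < x))), prod_range_add,
    Nat.add_sub_cancel_left]
  congr 1
  · rw [prod_congr rfl fun i hi => by rw [decide_eq_true (mem_range.1 hi)], prod_const,
      card_range]
  · rw [prod_congr rfl fun i _ => by rw [decide_eq_false (by omega)], prod_const, card_range]

def blockMaj (s : ℕ) (v : Fin s → Bool) : Bool := decide (sPrime s ≤ cfgCard v)

noncomputable def blockPoly (s : ℕ) (b : Bool) : ℕ[X] :=
  ∑ v with blockMaj s v = b, X ^ cfgCard v

theorem blockPoly_four_true : blockPoly 4 true = 4 * X ^ 3 + X ^ 4 := by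
  rw [blockPoly, Finset.sum_comp]
  have hweights :
      ({v : Fin 4 → Bool | blockMaj 4 v = true} : Finset _).image cfgCard = {3, 4} := by
    decide
  have h3 : #{v : Fin 4 → Bool | blockMaj 4 v = true ∧ cfgCard v = 3} = 4 := by decide
  have h4 : #{v : Fin 4 → Bool | blockMaj 4 v = true ∧ cfgCard v = 4} = 1 := by decide
  rw [hweights, sum_pair (by norm_num)]
  simp only [filter_filter, h3, h4, nsmul_eq_mul, Nat.cast_ofNat, Nat.cast_one, one_mul]

theorem blockPoly_four_false : blockPoly 4 false = 1 + 4 * X + 6 * X ^ 2 := by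
  rw [blockPoly, Finset.sum_comp]
  have hweights :
      ({v : Fin 4 → Bool | blockMaj 4 v = false} : Finset _).image cfgCard = {0, 1, 2} := by
    decide
  have h0 : #{v : Fin 4 → Bool | blockMaj 4 v = false ∧ cfgCard v = 0} = 1 := by decide
  have h1 : #{v : Fin 4 → Bool | blockMaj 4 v = false ∧ cfgCard v = 1} = 4 := by decide
  have h2 : #{v : Fin 4 → Bool | blockMaj 4 v = false ∧ cfgCard v = 2} = 6 := by decide
  rw [hweights, sum_insert (by decide), sum_pair (by norm_num)]
  simp only [filter_filter, h0, h1, h2, nsmul_eq_mul, Nat.cast_ofNat, Nat.cast_one, one_mul,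
    pow_zero, pow_one, add_assoc]

section Blocks

variable (s n : ℕ)

def blockEquiv : (Fin (s ^ (n + 1)) → Bool) ≃ (Fin (s ^ n) → Fin s → Bool) :=
  ((finProdFinEquiv.trans (finCongr (pow_succ s n).symm)).arrowCongr (Equiv.refl Bool)).symm.trans
    (Equiv.curry _ _ _)

variable {s n}

theorem blockEquiv_apply (Z : Fin (s ^ (n + 1)) → Bool) (i : Fin (s ^ n)) (j : Fin s) :
    blockEquiv s n Z i j = Z (finCongr (pow_succ s n).symm (finProdFinEquiv (i, j))) := rfl

theorem piMap_eq_blockMaj (Z : Fin (s ^ (n + 1)) → Bool) :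
    piMap s n Z = fun i => blockMaj s (blockEquiv s n Z i) := by
  ext i
  simp only [piMap, blockMaj, cfgCard, card_filter]
  congr 2
  refine sum_congr rfl fun j _ => ?_
  rw [blockEquiv_apply]
  exact congrArg (fun k => if Z k = true then 1 else 0) (Fin.ext (by simp [add_comm]))

theorem cfgCard_eq_sum_blockEquiv (Z : Fin (s ^ (n + 1)) → Bool) :
    cfgCard Z = ∑ i, cfgCard (blockEquiv s n Z i) := by
  simp only [cfgCard, card_filter]
  rw [← Equiv.sum_comp (finProdFinEquiv.trans (finCongr (pow_succ s n).symm)),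
    Fintype.sum_prod_type]
  rfl

theorem cCount_eq_coeff_prod (Y : Fin (s ^ n) → Bool) (z : ℕ) :
    cCount s n Y z = (∏ i, blockPoly s (Y i)).coeff z := by
  unfold blockPoly
  rw [cCount, ← card_filter_piFinset_sum_eq_coeff]
  refine card_equiv (blockEquiv s n) fun Z => ?_
  simp only [mem_filter, mem_univ, true_and, Fintype.mem_piFinset, piMap_eq_blockMaj, funext_iff,
    cfgCard_eq_sum_blockEquiv (n := n) Z]
  exact and_comm

end Blocks

theorem cFix_four_general (n x y : ℕ) (hx : x ≤ 4 ^ n) :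
    cFix 4 n x (3 * x + y)
      = ∑ t ∈ (Finset.range (y + 1) ×ˢ Finset.range (y + 1) ×ˢ
            Finset.range (y + 1)).filter
            (fun t => t.1 + 2 * t.2.1 + t.2.2 = y),
          x.choose t.1 * (4 ^ n - x).choose t.2.1 * (4 ^ n - x - t.2.1).choose t.2.2
            * 4 ^ (x - t.1 + t.2.2) * 6 ^ t.2.1 := by
  have hP : blockPoly 4 true = X ^ 3 * (X + C 4) := by
    rw [blockPoly_four_true, map_ofNat]
    ring
  have hQ : blockPoly 4 false = 1 + C 4 * X + C 6 * X ^ 2 := by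
    rw [blockPoly_four_false, map_ofNat, map_ofNat]
  rw [cFix, cCount_eq_coeff_prod, prod_stdCfg _ hx, hP, hQ, mul_pow, ← pow_mul, mul_assoc,
    add_comm (3 * x) y, coeff_X_pow_mul, coeff_X_add_C_pow_mul_trinomial_pow]
  refine sum_congr rfl fun t _ => ?_
  rw [Nat.cast_id, Nat.cast_id, Nat.cast_id, pow_add]
  ring

/-- Size-4 transition counts: for group size `s = 4` (so `s' = 3`),
`c_n(4, x, 3x + y) = Σ_{i+2j+k=y} C(x,i) C(4^n-x, j) C(4^n-x-j, k) 4^{x-i+k} 6^j`. -/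
theorem cFix_four (n x y : ℕ) (hx : x ≤ 4 ^ n) (hy : y ≤ 2 * 4 ^ n - x) :
    cFix 4 n x (3 * x + y)
      = ∑ t ∈ (Finset.range (y + 1) ×ˢ Finset.range (y + 1) ×ˢ
            Finset.range (y + 1)).filter
            (fun t => t.1 + 2 * t.2.1 + t.2.2 = y),
          x.choose t.1 * (4 ^ n - x).choose t.2.1 * (4 ^ n - x - t.2.1).choose t.2.2
            * 4 ^ (x - t.1 + t.2.2) * 6 ^ t.2.1 :=
  cFix_four_general n x y hx
end

section
/- For every ε > 0 there exist a₀ > 0 and N₀ ∈ ℕ such that for all N ≥ N₀ the following holds: if p : ℤ → ℝ satisfies p(0) = 0, p(N) = 1 and the first-step equations p(x) = q₁(x) p(x+1) + q₋₁(x) p(x−1) + q₋₂(x) p(x−2) + (1 − q₁(x) − q₋₁(x) − q₋₂(x)) p(x) for all 0 < x < N, then p(x) ≥ 1 − exp(−a₀ ε N) for every integer x with (c₊ + 2ε)N < x < N. In words, under the majority rule with group size 4, the probability p_x(N,4) that opinion +1 wins starting from more than (c₊ + 2ε)N supporters is at least 1 − exp(−a₀ ε N). -/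
/-!
Above density `a > c₊` the chain drifts upwards: `3a² - a - 1 > 0`, and for
`β = 1 + (3a² - a - 1)/14` the barrier `x ↦ β ^ (m - x)`, `m = ⌈aN⌉`, is superharmonic for
the generator on `(m, N)` once `N ≥ 8 / (3a² - a - 1)`. So `1 - p - β ^ (m - ·)` is subharmonic
there; it is nonpositive at `N` and, because `p ≥ 0` by the minimum principle, at `m - 1` and `m`.
As `q₁ > 0` above `m`, a maximiser can always be pushed one step up, which gives the maximum
principle and hence `1 - p x ≤ β ^ (m - x)`. With `a = c₊ + ε`, a start above `(c₊ + 2ε)N` lies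
at least `εN/2` above `m`.
-/

/-- `q₁(x) = C(x,3)·(N−x)/C(N,4)` for an integer state `x`, probability of a
`+1` jump in the size-4 public debate model with population `N`. -/
noncomputable def q1z (N : ℕ) (x : ℤ) : ℝ :=
  (x.toNat.choose 3 : ℝ) * ((((N : ℤ) - x).toNat : ℕ) : ℝ) / (N.choose 4 : ℝ)

/-- `q₋₁(x) = x·C(N−x,3)/C(N,4)` for an integer state `x`. -/
noncomputable def qm1z (N : ℕ) (x : ℤ) : ℝ :=
  (x.toNat : ℝ) * ((((N : ℤ) - x).toNat).choose 3 : ℝ) / (N.choose 4 : ℝ)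

/-- `q₋₂(x) = C(x,2)·C(N−x,2)/C(N,4)` for an integer state `x`. -/
noncomputable def qm2z (N : ℕ) (x : ℤ) : ℝ :=
  (x.toNat.choose 2 : ℝ) * ((((N : ℤ) - x).toNat).choose 2 : ℝ) / (N.choose 4 : ℝ)

lemma cast_choose_three (n : ℕ) : (n.choose 3 : ℝ) = n * (n - 1) * (n - 2) / 6 := by
  induction n with
  | zero => simp
  | succ k ih =>
    rw [Nat.choose_succ_succ]
    push_cast [ih, Nat.cast_choose_two]
    ring

lemma qm1z_nonneg (N : ℕ) (x : ℤ) : 0 ≤ qm1z N x := by unfold qm1z; positivity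

lemma qm2z_nonneg (N : ℕ) (x : ℤ) : 0 ≤ qm2z N x := by unfold qm2z; positivity

section Rates

variable {N : ℕ} {x : ℤ}

lemma cast_toNat_sub (hxN : x ≤ N) : ((((N : ℤ) - x).toNat : ℕ) : ℝ) = N - x := by
  have := Int.toNat_of_nonneg (sub_nonneg.2 hxN)
  exact_mod_cast this

lemma q1z_eq (hx : 0 ≤ x) (hxN : x ≤ N) :
    q1z N x = x * (x - 1) * (x - 2) / 6 * (N - x) / N.choose 4 := by
  have hX : ((x.toNat : ℕ) : ℝ) = x := by exact_mod_cast Int.toNat_of_nonneg hx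
  simp only [q1z, cast_choose_three, hX, cast_toNat_sub hxN]

lemma qm1z_eq (hx : 0 ≤ x) (hxN : x ≤ N) :
    qm1z N x = x * ((N - x) * (N - x - 1) * (N - x - 2) / 6) / N.choose 4 := by
  have hX : ((x.toNat : ℕ) : ℝ) = x := by exact_mod_cast Int.toNat_of_nonneg hx
  simp only [qm1z, cast_choose_three, hX, cast_toNat_sub hxN]

lemma qm2z_eq (hx : 0 ≤ x) (hxN : x ≤ N) :
    qm2z N x = x * (x - 1) / 2 * ((N - x) * (N - x - 1) / 2) / N.choose 4 := by
  have hX : ((x.toNat : ℕ) : ℝ) = x := by exact_mod_cast Int.toNat_of_nonneg hx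
  simp only [qm2z, Nat.cast_choose_two, hX, cast_toNat_sub hxN]

lemma q1z_pos (h3x : 3 ≤ x) (hxN : x < N) : 0 < q1z N x := by
  have hC : (0 : ℝ) < N.choose 4 := by exact_mod_cast Nat.choose_pos (by omega)
  have hX : (3 : ℝ) ≤ x := by exact_mod_cast h3x
  have hXN : (x : ℝ) + 1 ≤ N := by exact_mod_cast hxN
  rw [q1z_eq (by omega) hxN.le]
  apply div_pos _ hC
  apply mul_pos (div_pos _ (by norm_num)) (by linarith)
  exact mul_pos (mul_pos (by linarith) (by linarith)) (by linarith)

end Rates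

noncomputable def debateGen (N : ℕ) (f : ℤ → ℝ) (x : ℤ) : ℝ :=
  q1z N x * (f (x + 1) - f x) + qm1z N x * (f (x - 1) - f x) + qm2z N x * (f (x - 2) - f x)

section Generator

variable {N : ℕ} {x : ℤ}

lemma debateGen_eq_zero_of_eq {p : ℤ → ℝ}
    (h : p x = q1z N x * p (x + 1) + qm1z N x * p (x - 1) + qm2z N x * p (x - 2)
      + (1 - q1z N x - qm1z N x - qm2z N x) * p x) :
    debateGen N p x = 0 := by
  unfold debateGen
  linear_combination -h

lemma debateGen_neg (f : ℤ → ℝ) : debateGen N (fun y => -f y) x = -debateGen N f x := by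
  unfold debateGen; ring

lemma debateGen_const_sub_sub (c : ℝ) (f g : ℤ → ℝ) :
    debateGen N (fun y => c - f y - g y) x = -debateGen N f x - debateGen N g x := by
  unfold debateGen; ring

lemma debateGen_zpow {β : ℝ} (hβ : β ≠ 0) (m : ℤ) :
    debateGen N (fun y => β ^ (m - y)) x
      = β ^ (m - x) * (q1z N x * (β⁻¹ - 1) + qm1z N x * (β - 1) + qm2z N x * (β ^ 2 - 1)) := by
  simp only [debateGen]
  rw [show m - (x + 1) = m - x - 1 by ring, show m - (x - 1) = m - x + 1 by ring,
    show m - (x - 2) = m - x + 2 by ring, zpow_sub_one₀ hβ, zpow_add_one₀ hβ, zpow_add₀ hβ]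
  norm_cast
  ring

lemma debateGen_zpow_nonpos {β : ℝ} (hβ : 1 ≤ β) (m : ℤ)
    (hrate : qm1z N x * β + qm2z N x * (β * (β + 1)) ≤ q1z N x) :
    debateGen N (fun y => β ^ (m - y)) x ≤ 0 := by
  have hβ0 : β ≠ 0 := by positivity
  have hfactor : q1z N x * (β⁻¹ - 1) + qm1z N x * (β - 1) + qm2z N x * (β ^ 2 - 1)
      = (1 - β⁻¹) * (qm1z N x * β + qm2z N x * (β * (β + 1)) - q1z N x) := by
    field_simp
    ring
  have hinv : β⁻¹ ≤ 1 := inv_le_one_of_one_le₀ hβ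
  rw [debateGen_zpow hβ0, hfactor]
  exact mul_nonpos_of_nonneg_of_nonpos (by positivity)
    (mul_nonpos_of_nonneg_of_nonpos (by linarith) (by linarith))

lemma le_succ_of_isMaxOn {u : ℤ → ℝ} {a b : ℤ} (hax : a + 2 ≤ x) (hxb : x < b)
    (hmax : IsMaxOn u (Set.Icc a b) x) (hq : 0 < q1z N x) (hgen : 0 ≤ debateGen N u x) :
    u x ≤ u (x + 1) := by
  have h1 : u (x - 1) ≤ u x := isMaxOn_iff.1 hmax _ ⟨by omega, by omega⟩
  have h2 : u (x - 2) ≤ u x := isMaxOn_iff.1 hmax _ ⟨by omega, by omega⟩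
  have hup : 0 ≤ q1z N x * (u (x + 1) - u x) := by
    unfold debateGen at hgen
    nlinarith [mul_nonneg (qm1z_nonneg N x) (sub_nonneg.2 h1),
      mul_nonneg (qm2z_nonneg N x) (sub_nonneg.2 h2)]
  exact sub_nonneg.1 ((mul_nonneg_iff_of_pos_left hq).1 hup)

end Generator

theorem le_of_isMaxOn_le_succ {u : ℤ → ℝ} {a b : ℤ} {C : ℝ} (hb : u b ≤ C)
    (hstep : ∀ x ∈ Set.Ico a b, IsMaxOn u (Set.Icc a b) x → C < u x → u x ≤ u (x + 1)) :
    ∀ y ∈ Set.Icc a b, u y ≤ C := by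
  classical
  intro y hy
  by_contra! hCy
  have hy' : y ∈ Finset.Icc a b := Finset.mem_Icc.2 hy
  obtain ⟨x₀, hx₀, hmax₀⟩ := Finset.exists_max_image (Finset.Icc a b) u ⟨y, hy'⟩
  set S := (Finset.Icc a b).filter (fun x => IsMaxOn u (Set.Icc a b) x)
  have hmaxS : ∀ x, x ∈ S ↔ x ∈ Set.Icc a b ∧ IsMaxOn u (Set.Icc a b) x := by
    intro x; simp [S]
  have hS : S.Nonempty :=
    ⟨x₀, (hmaxS x₀).2 ⟨Finset.mem_Icc.1 hx₀,
      isMaxOn_iff.2 fun z hz => hmax₀ z (Finset.mem_Icc.2 hz)⟩⟩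
  obtain ⟨⟨hax, hxb⟩, hmax⟩ := (hmaxS _).1 (S.max'_mem hS)
  set x := S.max' hS
  have hCx : C < u x := hCy.trans_le (isMaxOn_iff.1 hmax y hy)
  have hxb' : x < b := lt_of_le_of_ne hxb fun h => by rw [h] at hCx; linarith
  have hstep' := hstep x ⟨hax, hxb'⟩ hmax hCx
  have hsucc : x + 1 ∈ S := (hmaxS _).2 ⟨⟨by omega, by omega⟩,
    isMaxOn_iff.2 fun z hz => (isMaxOn_iff.1 hmax z hz).trans hstep'⟩
  have := S.le_max' _ hsucc
  omega

section Boundary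

variable {N : ℕ}

lemma q1z_one (N : ℕ) : q1z N 1 = 0 := by simp [q1z, Nat.choose_eq_zero_of_lt]

lemma q1z_two (N : ℕ) : q1z N 2 = 0 := by simp [q1z]

lemma qm2z_one (N : ℕ) : qm2z N 1 = 0 := by simp [qm2z]

lemma qm1z_one_pos (hN : 4 ≤ N) : 0 < qm1z N 1 := by
  have h3 : 0 < (((N : ℤ) - 1).toNat).choose 3 := Nat.choose_pos (by omega)
  have hC : 0 < N.choose 4 := Nat.choose_pos hN
  unfold qm1z
  simp only [Int.toNat_one, Nat.cast_one, one_mul]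
  positivity

lemma qm2z_two_pos (hN : 4 ≤ N) : 0 < qm2z N 2 := by
  have h2 : 0 < (((N : ℤ) - 2).toNat).choose 2 := Nat.choose_pos (by omega)
  have hC : 0 < N.choose 4 := Nat.choose_pos hN
  unfold qm2z
  simp only [show (2 : ℤ).toNat = 2 from rfl, Nat.choose_self, Nat.cast_one, one_mul]
  positivity

lemma eq_zero_one_two_of_debateGen_eq_zero {p : ℤ → ℝ} (hN : 4 ≤ N) (hp0 : p 0 = 0)
    (h1 : debateGen N p 1 = 0) (h2 : debateGen N p 2 = 0) : p 1 = 0 ∧ p 2 = 0 := by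
  simp only [debateGen, q1z_one, q1z_two, qm2z_one] at h1 h2
  norm_num [hp0] at h1 h2
  have hp1 : p 1 = 0 := h1.resolve_left (qm1z_one_pos hN).ne'
  have hsum : (qm1z N 2 + qm2z N 2) * p 2 = 0 := by linear_combination -h2 + qm1z N 2 * hp1
  have hq : 0 < qm1z N 2 + qm2z N 2 := by linarith [qm1z_nonneg N 2, qm2z_two_pos hN]
  exact ⟨hp1, (mul_eq_zero.1 hsum).resolve_left hq.ne'⟩

theorem nonneg_of_debateGen_eq_zero {p : ℤ → ℝ} (hN : 4 ≤ N) (hp0 : p 0 = 0) (hpN : 0 ≤ p N)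
    (hgen : ∀ x : ℤ, 0 < x → x < N → debateGen N p x = 0) :
    ∀ x ∈ Set.Icc (0 : ℤ) N, 0 ≤ p x := by
  obtain ⟨hp1, hp2⟩ := eq_zero_one_two_of_debateGen_eq_zero hN hp0
    (hgen 1 (by norm_num) (by omega)) (hgen 2 (by norm_num) (by omega))
  have hneg := le_of_isMaxOn_le_succ (u := fun y => -p y) (a := 0) (b := N) (C := 0) (by simpa using hpN)
    fun x ⟨hx0, hxN⟩ hmax hpos => by
      have hx3 : 3 ≤ x := by
        by_contra! hx
        interval_cases x <;> simp_all
      exact le_succ_of_isMaxOn (by omega) hxN hmax (q1z_pos hx3 hxN)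
        (by rw [debateGen_neg, hgen x (by omega) hxN, neg_zero])
  exact fun x hx => neg_nonpos.1 (hneg x hx)

end Boundary

/-- Up to the factor `4a(1-a)`, the mean drift `q₁ - q₋₁ - 2q₋₂` of the density at `a`;
its positive root is `c₊`. -/
def debateDrift (a : ℝ) : ℝ := 3 * a ^ 2 - a - 1

/-- The constant `14` is just small enough for `density_barrier_ineq`. -/
noncomputable def barrierBase (a : ℝ) : ℝ := 1 + debateDrift a / 14

lemma debateDrift_cPlus_add (ε : ℝ) :
    debateDrift ((1 + Real.sqrt 13) / 6 + ε) = ε * Real.sqrt 13 + 3 * ε ^ 2 := by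
  unfold debateDrift
  linear_combination (Real.sq_sqrt (by norm_num : (0 : ℝ) ≤ 13)) / 12

lemma debateDrift_le_one {a : ℝ} (ha : 0 ≤ a) (ha1 : a ≤ 1) : debateDrift a ≤ 1 := by
  unfold debateDrift; nlinarith

lemma one_lt_barrierBase {a : ℝ} (hδ : 0 < debateDrift a) : 1 < barrierBase a := by
  unfold barrierBase; linarith

lemma density_barrier_ineq {a : ℝ} (hδ : 0 < debateDrift a) :
    (1 - a) ^ 2 * barrierBase a + 3 / 2 * a * (1 - a) * (barrierBase a * (barrierBase a + 1))
      + debateDrift a / 2 ≤ a ^ 2 := by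
  unfold barrierBase debateDrift at *
  nlinarith [mul_pos hδ hδ]

lemma barrier_rate_ineq {a n X Y : ℝ} (ha : 1 / 2 ≤ a) (ha1 : a ≤ 1) (hδ : 0 < debateDrift a)
    (hn : 8 / debateDrift a ≤ n) (hXY : X + Y = n) (haX : a * n ≤ X) (hY : 1 ≤ Y) :
    (Y - 1) * (Y - 2) * barrierBase a
      + 3 / 2 * (X - 1) * (Y - 1) * (barrierBase a * (barrierBase a + 1))
      ≤ (X - 1) * (X - 2) := by
  have hdens := density_barrier_ineq hδ
  have hβ := one_lt_barrierBase hδ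
  set δ := debateDrift a
  set β := barrierBase a
  have hnδ : 8 ≤ n * δ := (div_le_iff₀ hδ).1 hn
  have hδ1 : δ ≤ 1 := debateDrift_le_one (by linarith) ha1
  have hn8 : 8 ≤ n := by nlinarith
  have hYn : Y ≤ (1 - a) * n := by linarith
  have hXYn : X * Y ≤ a * (1 - a) * n ^ 2 := by
    have : 0 ≤ (X - a * n) * (X - (1 - a) * n) := mul_nonneg (by linarith) (by nlinarith)
    rw [← hXY] at this ⊢; nlinarith
  have hX2 : a ^ 2 * n ^ 2 - 4 * n ≤ (X - 1) * (X - 2) := by nlinarith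
  have hY2 : (Y - 1) * (Y - 2) ≤ (1 - a) ^ 2 * n ^ 2 := by
    nlinarith [mul_self_le_mul_self (by linarith) hYn]
  have hXY1 : (X - 1) * (Y - 1) ≤ a * (1 - a) * n ^ 2 := by nlinarith
  nlinarith [mul_le_mul_of_nonneg_left hnδ (by linarith : (0 : ℝ) ≤ n),
    mul_le_mul_of_nonneg_right hdens (sq_nonneg n),
    mul_le_mul_of_nonneg_right hXY1 (by positivity : (0 : ℝ) ≤ β * (β + 1)),
    mul_le_mul_of_nonneg_right hY2 (by positivity : (0 : ℝ) ≤ β)]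

lemma qm1z_mul_add_qm2z_mul_le_q1z {a : ℝ} {N : ℕ} {x : ℤ} (ha : 1 / 2 ≤ a) (ha1 : a ≤ 1)
    (hδ : 0 < debateDrift a) (hN : 8 / debateDrift a ≤ N) (hax : a * N ≤ x) (hxN : x < N) :
    qm1z N x * barrierBase a + qm2z N x * (barrierBase a * (barrierBase a + 1)) ≤ q1z N x := by
  have hx0 : (0 : ℝ) ≤ x := le_trans (mul_nonneg (by linarith) (Nat.cast_nonneg N)) hax
  have hxN' : (x : ℝ) + 1 ≤ N := by exact_mod_cast hxN
  have hpoly := barrier_rate_ineq (X := x) (Y := N - x) ha ha1 hδ hN (by ring) hax (by linarith)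
  have hx0' : 0 ≤ x := by exact_mod_cast hx0
  have hβ := one_lt_barrierBase hδ
  rw [q1z_eq hx0' hxN.le, qm1z_eq hx0' hxN.le, qm2z_eq hx0' hxN.le,
    div_mul_eq_mul_div, div_mul_eq_mul_div, ← add_div]
  refine div_le_div_of_nonneg_right ?_ (Nat.cast_nonneg _)
  set β := barrierBase a
  have hY : (0 : ℝ) ≤ N - x := by linarith
  have hXY : (0 : ℝ) ≤ x * (N - x) / 6 := by positivity
  calc (x : ℝ) * ((N - x) * (N - x - 1) * (N - x - 2) / 6) * β
        + x * (x - 1) / 2 * ((N - x) * (N - x - 1) / 2) * (β * (β + 1))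
      = x * (N - x) / 6 * ((N - x - 1) * (N - x - 2) * β
          + 3 / 2 * (x - 1) * (N - x - 1) * (β * (β + 1))) := by ring
    _ ≤ x * (N - x) / 6 * ((x - 1) * (x - 2)) := mul_le_mul_of_nonneg_left hpoly hXY
    _ = x * (x - 1) * (x - 2) / 6 * (N - x) := by ring

theorem one_sub_le_zpow_of_debateGen {N : ℕ} {p : ℤ → ℝ} {β : ℝ} {m : ℤ} (hβ : 1 ≤ β)
    (hm : 2 ≤ m) (hpnn : ∀ x ∈ Set.Icc (m - 1) m, 0 ≤ p x) (hpN : p N = 1)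
    (hgen : ∀ x : ℤ, m < x → x < N → debateGen N p x = 0)
    (hrate : ∀ x : ℤ, m < x → x < N → qm1z N x * β + qm2z N x * (β * (β + 1)) ≤ q1z N x) :
    ∀ x ∈ Set.Icc (m - 1) (N : ℤ), 1 - p x ≤ β ^ (m - x) := by
  have hu := le_of_isMaxOn_le_succ (u := fun y => 1 - p y - β ^ (m - y)) (a := m - 1) (b := N)
    (C := 0) (by simp only [hpN]; linarith [zpow_pos (by linarith : 0 < β) (m - N)])
    fun x ⟨hx, hxN⟩ hmax hpos => by
      have hmx : m < x := by
        by_contra! hxm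
        have : 1 ≤ β ^ (m - x) := one_le_zpow₀ hβ (by omega)
        linarith [hpnn x ⟨hx, hxm⟩]
      refine le_succ_of_isMaxOn (by omega) hxN hmax (q1z_pos (by omega) hxN) ?_
      rw [debateGen_const_sub_sub, hgen x hmx hxN]
      linarith [debateGen_zpow_nonpos (N := N) (x := x) hβ m (hrate x hmx hxN)]
  exact fun x hx => by linarith [hu x hx]

lemma zpow_neg_le_exp {β t : ℝ} {k : ℤ} (hβ : 1 ≤ β) (ht : t ≤ k) :
    β ^ (-k) ≤ Real.exp (-(Real.log β * t)) := by
  rw [← Real.rpow_intCast, Real.rpow_def_of_pos (by linarith), Real.exp_le_exp]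
  push_cast
  nlinarith [Real.log_nonneg hβ]

theorem one_sub_le_barrierBase_zpow {a : ℝ} {N : ℕ} {p : ℤ → ℝ} (ha : 1 / 2 ≤ a) (ha1 : a ≤ 1)
    (hδ : 0 < debateDrift a) (hN : 8 / debateDrift a ≤ N) (hp0 : p 0 = 0) (hpN : p N = 1)
    (hgen : ∀ x : ℤ, 0 < x → x < N → debateGen N p x = 0) {x : ℤ} (hx : ⌈a * N⌉ ≤ x)
    (hxN : x ≤ N) : 1 - p x ≤ barrierBase a ^ (⌈a * N⌉ - x) := by
  have h8 : (8 : ℝ) ≤ N :=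
    le_trans ((le_div_iff₀ hδ).2 (by nlinarith [debateDrift_le_one (by linarith) ha1])) hN
  have hpnn := nonneg_of_debateGen_eq_zero (by exact_mod_cast (by linarith : (4 : ℝ) ≤ N)) hp0
    (hpN ▸ zero_le_one) hgen
  have hm : 2 ≤ ⌈a * N⌉ := Int.le_ceil_iff.2 (by push_cast; nlinarith)
  exact one_sub_le_zpow_of_debateGen (one_lt_barrierBase hδ).le hm
    (fun y ⟨hy, hym⟩ => hpnn y ⟨by omega, by omega⟩) hpN (fun y hmy hyN => hgen y (by omega) hyN)
    (fun y hmy hyN => qm1z_mul_add_qm2z_mul_le_q1z ha ha1 hδ hN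
      ((Int.le_ceil _).trans (by exact_mod_cast hmy.le)) hyN) x ⟨by omega, hxN⟩

/-- Lower bound on the winning probability of opinion `+1` under the majority
rule with group size 4: if the initial number of supporters is above
`(c₊ + 2ε)N` with `c₊ = (1+√13)/6`, then `p_x(N,4) ≥ 1 − exp(−a₀ ε N)` for
all large `N`. -/
theorem debate_majority_four_lower (ε : ℝ) (hε : 0 < ε) :
    ∃ a₀ > 0, ∃ N₀ : ℕ, ∀ N ≥ N₀, ∀ p : ℤ → ℝ,
      p 0 = 0 → p N = 1 →
      (∀ x : ℤ, 0 < x → x < N →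
        p x = q1z N x * p (x + 1) + qm1z N x * p (x - 1) + qm2z N x * p (x - 2)
          + (1 - q1z N x - qm1z N x - qm2z N x) * p x) →
      ∀ x : ℤ, ((1 + Real.sqrt 13) / 6 + 2 * ε) * N < (x : ℝ) → x < N →
        1 - Real.exp (-(a₀ * ε * N)) ≤ p x := by
  have hs3 : 3 ≤ Real.sqrt 13 := Real.le_sqrt_of_sq_le (by norm_num)
  set c := (1 + Real.sqrt 13) / 6
  have hc : 2 / 3 ≤ c := by simp only [c]; linarith
  rcases le_or_gt 1 (c + 2 * ε) with hbig | hsmall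
  · refine ⟨1, one_pos, 0, fun N _ p _ _ _ x hx hxN => absurd hx (not_lt.2 ?_)⟩
    have : (x : ℝ) + 1 ≤ N := by exact_mod_cast hxN
    nlinarith [(Nat.cast_nonneg N : (0 : ℝ) ≤ N)]
  set a := c + ε
  have hδ : 3 * ε ≤ debateDrift a := by
    rw [debateDrift_cPlus_add]; nlinarith
  have hβ := one_lt_barrierBase (a := a) (by linarith)
  refine ⟨Real.log (barrierBase a) / 2, half_pos (Real.log_pos hβ),
    ⌈8 / debateDrift a + 2 / ε⌉₊, fun N hN p hp0 hpN hharm x hx hxN => ?_⟩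
  have hN' : 8 / debateDrift a + 2 / ε ≤ N := Nat.ceil_le.1 hN
  have hεN : 2 ≤ ε * N := by
    rw [← div_le_iff₀' hε]
    linarith [div_pos (by norm_num : (0 : ℝ) < 8) (by linarith : 0 < debateDrift a)]
  have hxm : ε * N / 2 ≤ ((x - ⌈a * N⌉ : ℤ) : ℝ) := by
    push_cast; linarith [Int.ceil_lt_add_one (a * N)]
  have hmx : ⌈a * N⌉ ≤ x := by
    have : (0 : ℝ) ≤ ((x - ⌈a * N⌉ : ℤ) : ℝ) := by linarith
    exact sub_nonneg.1 (by exact_mod_cast this)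
  have hbound := one_sub_le_barrierBase_zpow (a := a) (by linarith) (by linarith) (by linarith)
    (by linarith [div_pos two_pos hε]) hp0 hpN
    (fun y hy hyN => debateGen_eq_zero_of_eq (hharm y hy hyN)) hmx hxN.le
  have hexp := zpow_neg_le_exp hβ.le hxm
  rw [neg_sub, show Real.log (barrierBase a) * (ε * N / 2) = Real.log (barrierBase a) / 2 * ε * N
    by ring] at hexp
  linarith
end
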